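/- arXiv:2106.10742 — 2 statements merged into one kernel-verified Lean document; each statement's English description precedes it below -/
import Mathlib

section
/- Let N be a chain complex of R-modules and M an R-module. Then N lies in the subprojectivity domain of the sphere complex underline{M}[n] for every integer n if and only if the complex of abelian groups Hom_R(M, N) is exact and N_n lies in the subprojectivity domain of M for every integer n. -/
open CategoryTheory CategoryTheory.Limits

universe u

/-- `N` belongs to the subprojectivity domain of `M`: every morphism `M ⟶ N` factors
through a projective object. -/
def SubprojDomain {A : Type*} [Category A] (M N : A) : Prop :=
  ∀ f : M ⟶ N, ∃ (P : A) (_ : Projective P) (a : M ⟶ P) (b : P ⟶ N), a ≫ b = f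

/-- The complex of abelian groups `Hom_R(M, N)` associated to a module `M` and a chain
complex `N`. -/
noncomputable def homComplex {R : Type u} [Ring R] (M : ModuleCat.{u} R)
    (N : ChainComplex (ModuleCat.{u} R) ℤ) : ChainComplex AddCommGrpCat.{u} ℤ :=
  ((preadditiveCoyoneda.obj (Opposite.op M)).mapHomologicalComplex
    (ComplexShape.down ℤ)).obj N

/-!
A morphism `M[j] ⟶ N` is a cycle `x : M ⟶ N_j`, and it factors through a projective complex iff
`x = y ≫ d` for some `y : M ⟶ N_{j+1}` factoring through a projective module: projective complexes
have projective components and all their cycles are boundaries, and the disc on a projective module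
is a projective complex. Hence exactness of `Hom_R(M, N)` is necessary. For `g : M ⟶ N_n`, lifting
the cycle `g ≫ d` gives `y₁` with `y₁ ≫ d = g ≫ d` factoring through a projective, and lifting the
cycle `g - y₁` writes it as `y₂ ≫ d` with `y₂` factoring through a projective; so `g` does too.
Conversely, exactness provides the lift `y` of any cycle, and `M[n] ⟶ N` factors through the disc
on the projective module through which `y` factors.
-/

namespace CategoryTheory

variable {C : Type*} [Category C]

def FactorsThroughProjective {X Y : C} (f : X ⟶ Y) : Prop :=
  ∃ (P : C) (_ : Projective P) (a : X ⟶ P) (b : P ⟶ Y), a ≫ b = f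

lemma subprojDomain_iff_forall_factorsThroughProjective {X Y : C} :
    SubprojDomain X Y ↔ ∀ f : X ⟶ Y, FactorsThroughProjective f :=
  Iff.rfl

namespace FactorsThroughProjective

lemma comp {X Y Z : C} {f : X ⟶ Y} (hf : FactorsThroughProjective f) (g : Y ⟶ Z) :
    FactorsThroughProjective (f ≫ g) := by
  obtain ⟨P, hP, a, b, rfl⟩ := hf
  exact ⟨P, hP, a, b ≫ g, by rw [Category.assoc]⟩

lemma add [Preadditive C] [HasBinaryBiproducts C] {X Y : C} {f g : X ⟶ Y}
    (hf : FactorsThroughProjective f) (hg : FactorsThroughProjective g) :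
    FactorsThroughProjective (f + g) := by
  obtain ⟨P, hP, a, b, rfl⟩ := hf
  obtain ⟨Q, hQ, a', b', rfl⟩ := hg
  exact ⟨P ⊞ Q, inferInstance, biprod.lift a a', biprod.desc b b', biprod.lift_desc ..⟩

end FactorsThroughProjective

end CategoryTheory

namespace HomologicalComplex

open Category

variable {C : Type*} [Category C] [HasZeroMorphisms C] [HasZeroObject C]
  {ι : Type*} {c : ComplexShape ι} {i₀ i₁ : ι}

section MkHomToDouble

variable (hi₀₁ : c.Rel i₀ i₁) (h : i₀ ≠ i₁) {X₀ X₁ : C} {f : X₀ ⟶ X₁} {K : HomologicalComplex C c}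
  (φ₀ : K.X i₀ ⟶ X₀) (φ₁ : K.X i₁ ⟶ X₁) (comm : K.d i₀ i₁ ≫ φ₁ = φ₀ ≫ f)
  (hφ : ∀ k, c.Rel k i₀ → K.d k i₀ ≫ φ₀ = 0)

open scoped Classical in
noncomputable def mkHomToDouble : K ⟶ double f hi₀₁ where
  f k :=
    if hk₀ : k = i₀ then
      eqToHom (by rw [hk₀]) ≫ φ₀ ≫ (doubleXIso₀ f hi₀₁).inv ≫ eqToHom (by rw [hk₀])
    else if hk₁ : k = i₁ then
      eqToHom (by rw [hk₁]) ≫ φ₁ ≫ (doubleXIso₁ f hi₀₁ h).inv ≫ eqToHom (by rw [hk₁])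
    else 0
  comm' k₀ k₁ hk := by
    by_cases h₁ : k₁ = i₁
    · subst h₁
      obtain rfl := c.prev_eq hk hi₀₁
      simp [dif_neg h.symm, double_d f hi₀₁ h, comm]
    · by_cases h₀ : k₁ = i₀
      · subst h₀
        rw [double_d_eq_zero₁ _ _ _ _ h, comp_zero, dif_pos rfl]
        simp [reassoc_of% hφ k₀ hk]
      · apply (isZero_double_X f hi₀₁ k₁ h₀ h₁).eq_of_tgt

@[simp]
lemma mkHomToDouble_f₀ :
    (mkHomToDouble hi₀₁ h φ₀ φ₁ comm hφ).f i₀ = φ₀ ≫ (doubleXIso₀ f hi₀₁).inv := by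
  simp [mkHomToDouble]

@[simp]
lemma mkHomToDouble_f₁ :
    (mkHomToDouble hi₀₁ h φ₀ φ₁ comm hφ).f i₁ = φ₁ ≫ (doubleXIso₁ f hi₀₁ h).inv := by
  simp [mkHomToDouble, dif_neg h.symm]

end MkHomToDouble

lemma projective_double_id [HasFiniteColimits C] (hi₀₁ : c.Rel i₀ i₁) (h : i₀ ≠ i₁) (X : C)
    [Projective X] : Projective (double (𝟙 X) hi₀₁) where
  factors {E K} φ e he := by
    let l : X ⟶ E.X i₀ := Projective.factorThru ((doubleXIso₀ _ hi₀₁).inv ≫ φ.f i₀) (e.f i₀)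
    refine ⟨mkHomFromDouble hi₀₁ h l (l ≫ E.d i₀ i₁) (by simp) (by simp), ?_⟩
    ext
    · simp [l]
    · simp only [mkHomFromDouble_f₁, comp_f, assoc, ← e.comm, l,
        Projective.factorThru_comp_assoc]
      rw [φ.comm, double_d _ _ h]
      simp

lemma projective_X_of_rel (P : HomologicalComplex C c) [Projective P] (hi₀₁ : c.Rel i₀ i₁)
    (h : i₀ ≠ i₁) : Projective (P.X i₁) where
  factors {E Y} φ e he := by
    let π : double (𝟙 E) hi₀₁ ⟶ double (𝟙 Y) hi₀₁ :=
      mkHomToDouble hi₀₁ h ((doubleXIso₀ _ hi₀₁).hom ≫ e) ((doubleXIso₁ _ hi₀₁ h).hom ≫ e)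
        (by simp [double_d _ _ h]) (fun k _ ↦ by simp [double_d_eq_zero₁ _ _ _ _ h])
    have : Epi π := by
      refine epi_of_epi_f _ fun k ↦ ?_
      by_cases h₀ : k = i₀
      · subst h₀; simp only [π, mkHomToDouble_f₀]; infer_instance
      by_cases h₁ : k = i₁
      · subst h₁; simp only [π, mkHomToDouble_f₁]; infer_instance
      exact (isZero_double_X _ hi₀₁ k h₀ h₁).epi _
    obtain ⟨ψ, hψ⟩ := Projective.factors
      (mkHomToDouble hi₀₁ h (P.d i₀ i₁ ≫ φ) φ (by simp) (by simp) : P ⟶ double (𝟙 Y) hi₀₁) π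
    refine ⟨ψ.f i₁ ≫ (doubleXIso₁ _ hi₀₁ h).hom, ?_⟩
    have := congr_hom hψ i₁
    simp only [comp_f, π, mkHomToDouble_f₁] at this
    simpa [← cancel_mono (doubleXIso₁ (𝟙 Y) hi₀₁ h).inv] using this

end HomologicalComplex

namespace ChainComplex

open Category HomologicalComplex

variable {C : Type*} [Category C] [Preadditive C] [HasBinaryBiproducts C]

/-- The direct sum over `k` of the discs `P_k ⟶ P_k` (identity) in degrees `k`, `k - 1`. Its
projection `discSumπ` onto `P` is degreewise split, so it splits when `P` is projective, and then
the cycles of `P` are boundaries. -/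
noncomputable abbrev discSum (P : ChainComplex C ℤ) : ChainComplex C ℤ where
  X k := P.X k ⊞ P.X (k + 1)
  d i j := if h : j + 1 = i then biprod.fst ≫ (P.XIsoOfEq h).inv ≫ biprod.inr else 0
  shape i j hij := dif_neg (by simpa using hij)
  d_comp_d' i j k hij hjk := by
    simp only [ComplexShape.down_Rel] at hij hjk
    simp [dif_pos hij, dif_pos hjk]

lemma discSum_d (P : ChainComplex C ℤ) {i j : ℤ} (h : j + 1 = i) :
    (discSum P).d i j = biprod.fst ≫ (P.XIsoOfEq h).inv ≫ biprod.inr :=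
  dif_pos h

noncomputable def discSumπ (P : ChainComplex C ℤ) : discSum P ⟶ P where
  f k := biprod.fst + biprod.snd ≫ P.d (k + 1) k
  comm' i j hij := by
    simp only [ComplexShape.down_Rel] at hij
    subst hij
    simp [Preadditive.add_comp, Preadditive.comp_add]

instance (P : ChainComplex C ℤ) : Epi (discSumπ P) :=
  epi_of_epi_f _ fun k ↦ epi_of_epi_fac (show biprod.inl ≫ (discSumπ P).f k = 𝟙 _ by
    simp [discSumπ])

lemma exists_comp_d_eq_of_projective (P : ChainComplex C ℤ) [Projective P] {M : C} {i j : ℤ}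
    (hij : j + 1 = i) (f : M ⟶ P.X j) (hf : f ≫ P.d j (j - 1) = 0) :
    ∃ g : M ⟶ P.X i, g ≫ P.d i j = f := by
  subst hij
  obtain ⟨σ, hσ⟩ := Projective.factors (𝟙 P) (discSumπ P)
  have hfst : f ≫ σ.f j ≫ biprod.fst = 0 := by
    have := f ≫= σ.comm j (j - 1)
    rw [reassoc_of% hf, zero_comp, discSum_d P (by omega)] at this
    rw [← cancel_mono ((P.XIsoOfEq (by omega : j - 1 + 1 = j)).inv ≫ biprod.inr)]
    simpa using this
  refine ⟨f ≫ σ.f j ≫ biprod.snd, ?_⟩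
  calc (f ≫ σ.f j ≫ biprod.snd) ≫ P.d (j + 1) j
      = f ≫ σ.f j ≫ biprod.fst + (f ≫ σ.f j ≫ biprod.snd) ≫ P.d (j + 1) j := by
        rw [hfst, zero_add]
    _ = f ≫ σ.f j ≫ (discSumπ P).f j := by simp [discSumπ, Preadditive.comp_add]
    _ = f := by rw [← comp_f, hσ, id_f, comp_id]

end ChainComplex

section SubprojectivityOfSpheres

open HomologicalComplex

variable {C : Type*} [Category C] [Preadditive C] [HasBinaryBiproducts C] [HasZeroObject C]
  [HasFiniteColimits C]

lemma factorsThroughProjective_fromSingle_iff {M : C} {N : ChainComplex C ℤ} {i j : ℤ}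
    (hij : j + 1 = i) (F : (single C (ComplexShape.down ℤ) j).obj M ⟶ N) :
    FactorsThroughProjective F ↔ ∃ y : M ⟶ N.X i,
      y ≫ N.d i j = (singleObjXSelf _ j M).inv ≫ F.f j ∧ FactorsThroughProjective y := by
  have hrel : (ComplexShape.down ℤ).Rel i j := hij
  have hne : i ≠ j := by omega
  constructor
  · rintro ⟨P, hP, a, b, rfl⟩
    obtain ⟨w, hw⟩ := ChainComplex.exists_comp_d_eq_of_projective P hij
      ((singleObjXSelf _ j M).inv ≫ a.f j) (by simp [a.comm])
    exact ⟨w ≫ b.f i, by simp [reassoc_of% hw],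
      ⟨P.X i, projective_X_of_rel P (i₀ := i + 1) rfl (by omega), w, b.f i, rfl⟩⟩
  · rintro ⟨y, hy, Q, hQ, a, b, rfl⟩
    refine ⟨double (𝟙 Q) hrel, projective_double_id hrel hne Q,
      mkHomFromSingle (a ≫ (doubleXIso₁ _ hrel hne).inv)
        (fun k _ ↦ by simp [double_d_eq_zero₀ _ _ _ _ hne.symm]),
      mkHomFromDouble hrel hne b (b ≫ N.d i j) (by simp) (fun k _ ↦ by simp), ?_⟩
    refine from_single_hom_ext ?_
    simp only [Category.assoc] at hy
    simp [hy]

lemma exists_factorsThroughProjective_comp_d_eq {M : C} {N : ChainComplex C ℤ} {i j : ℤ}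
    (hij : j + 1 = i) (hN : SubprojDomain ((single C (ComplexShape.down ℤ) j).obj M) N)
    (x : M ⟶ N.X j) (hx : x ≫ N.d j (j - 1) = 0) :
    ∃ y : M ⟶ N.X i, y ≫ N.d i j = x ∧ FactorsThroughProjective y := by
  have hx' : ∀ k, (ComplexShape.down ℤ).Rel j k → x ≫ N.d j k = 0 := by
    rintro k hk
    obtain rfl : k = j - 1 := by simp at hk; omega
    exact hx
  simpa using (factorsThroughProjective_fromSingle_iff hij (mkHomFromSingle x hx')).1 (hN _)

end SubprojectivityOfSpheres

lemma homComplex_exactAt_iff {R : Type u} [Ring R] (M : ModuleCat.{u} R)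
    (N : ChainComplex (ModuleCat.{u} R) ℤ) (i : ℤ) :
    (homComplex M N).ExactAt i ↔
      ∀ x : M ⟶ N.X i, x ≫ N.d i (i - 1) = 0 →
        ∃ y : M ⟶ N.X (i + 1), y ≫ N.d (i + 1) i = x := by
  rw [HomologicalComplex.exactAt_iff' _ (i + 1) i (i - 1) (by simp) (by simp),
    ShortComplex.ab_exact_iff]
  rfl

/-- `N` lies in the subprojectivity domain of the sphere complex `M[n]` for
every `n` iff the complex of abelian groups `Hom_R(M, N)` is exact and `N_n` lies in the
subprojectivity domain of `M` for every `n`. -/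
theorem subprojDomain_all_spheres_iff
    {R : Type u} [Ring R] (N : ChainComplex (ModuleCat.{u} R) ℤ) (M : ModuleCat.{u} R) :
    (∀ n : ℤ, SubprojDomain
        ((HomologicalComplex.single (ModuleCat.{u} R) (ComplexShape.down ℤ) n).obj M) N) ↔
      ((∀ i : ℤ, (homComplex M N).ExactAt i) ∧
        ∀ n : ℤ, SubprojDomain M (N.X n)) := by
  constructor
  · intro hN
    refine ⟨fun i ↦ (homComplex_exactAt_iff M N i).2 fun x hx ↦
      (exists_factorsThroughProjective_comp_d_eq rfl (hN i) x hx).imp fun _ ↦ And.left,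
      fun n ↦ subprojDomain_iff_forall_factorsThroughProjective.2 fun g ↦ ?_⟩
    obtain ⟨y₁, hy₁, hy₁P⟩ := exists_factorsThroughProjective_comp_d_eq (i := n) (by omega)
      (hN (n - 1)) (g ≫ N.d n (n - 1)) (by simp)
    obtain ⟨y₂, hy₂, hy₂P⟩ := exists_factorsThroughProjective_comp_d_eq rfl (hN n) (g - y₁)
      (by simp [hy₁])
    simpa [hy₂] using hy₁P.add (hy₂P.comp (N.d (n + 1) n))
  · rintro ⟨hex, hM⟩ n F
    obtain ⟨y, hy⟩ := (homComplex_exactAt_iff M N n).1 (hex n)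
      ((HomologicalComplex.singleObjXSelf _ n M).inv ≫ F.f n) (by simp)
    exact (factorsThroughProjective_fromSingle_iff rfl F).2 ⟨y, hy, hM (n + 1) y⟩
end

section
/- A chain complex N of R-modules is exact if and only if N lies in the subprojectivity domain of the sphere complex underline{R}[n] for every integer n. -/
/-!
A map `R[n] ⟶ N` is the same as an `n`-cycle `x` of `N`. If `x = d y`, the map factors through
the disk `R → R` in degrees `n + 1, n`, which is projective because it corepresents evaluation
in degree `n + 1`. Conversely, a projective complex `P` is a retract of a contractible complex
mapping onto it, so `P` is contractible, hence exact; a cycle that factors through `P` therefore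
lifts to `P`, and its image in `N` is a boundary. Over modules, cycles out of `R` detect exactness.
-/

open CategoryTheory CategoryTheory.Limits

universe u

namespace HomologicalComplex

variable {C : Type*} [Category C] {ι : Type*} {c : ComplexShape ι}

lemma exactAt_of_homotopy_id_zero [Preadditive C] {K : HomologicalComplex C c}
    (h : Homotopy (𝟙 K) 0) (i : ι) [K.HasHomology i] : K.ExactAt i := by
  rw [exactAt_iff_isZero_homology, IsZero.iff_id_eq_zero]
  simpa using h.homologyMap_eq i

lemma projective_of_corepresentableBy_eval [HasZeroMorphisms C] [HasFiniteColimits C]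
    {X : C} [Projective X] {i : ι} {P : HomologicalComplex C c}
    (e : (eval C c i ⋙ coyoneda.obj (Opposite.op X)).CorepresentableBy P) : Projective P := by
  refine ⟨fun {E K} g π _ => ?_⟩
  let g' : X ⟶ K.X i := e.homEquiv g
  let l : X ⟶ E.X i := Projective.factorThru g' (π.f i)
  let l' : (eval C c i ⋙ coyoneda.obj (Opposite.op X)).obj E := l
  refine ⟨e.homEquiv.symm l', e.homEquiv.injective ?_⟩
  rw [e.homEquiv_comp, Equiv.apply_symm_apply]
  exact Projective.factorThru_comp g' (π.f i)

lemma projective_double_id_s17 [HasZeroMorphisms C] [HasZeroObject C] [HasFiniteColimits C]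
    (X : C) [Projective X] {i j : ι} (hij : c.Rel i j) (hne : i ≠ j) :
    Projective (double (𝟙 X) hij) :=
  projective_of_corepresentableBy_eval (evalCompCoyonedaCorepresentableByDoubleId hij hne X)

section Abelian

variable [Abelian C]

lemma ExactAt.exists_comp_d_eq {K : HomologicalComplex C c} {i j k : ι} (hK : K.ExactAt j)
    (hi : c.prev j = i) (hk : c.next j = k) {X : C} [Projective X] (φ : X ⟶ K.X j)
    (hφ : φ ≫ K.d j k = 0) : ∃ ψ : X ⟶ K.X i, ψ ≫ K.d i j = φ :=
  ⟨_, ((K.exactAt_iff' i j k hi hk).1 hK).liftFromProjective_comp φ hφ⟩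

lemma subprojDomain_single_of_exactAt [DecidableEq ι] {X : C} [Projective X]
    {K : HomologicalComplex C c} {i j : ι} (hij : c.Rel i j) (hne : i ≠ j) (hK : K.ExactAt j) :
    SubprojDomain ((single C c j).obj X) K := by
  intro f
  obtain ⟨ψ, hψ⟩ := hK.exists_comp_d_eq (c.prev_eq' hij) rfl
    ((singleObjXSelf c j X).inv ≫ f.f j) (by simp [f.comm])
  refine ⟨double (𝟙 X) hij, projective_double_id_s17 X hij hne,
    mkHomFromSingle (doubleXIso₁ _ hij hne).inv fun k _ => by
      rw [double_d_eq_zero₀ _ _ _ _ hne.symm, comp_zero],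
    mkHomFromDouble hij hne ψ (ψ ≫ K.d i j) (by simp) (by simp), ?_⟩
  ext
  simp [hψ]

end Abelian

end HomologicalComplex

namespace ChainComplex

open HomologicalComplex

variable {C : Type*} [Category C]

section DiskCover

variable [Preadditive C] [HasBinaryBiproducts C]

/-- The sum over `k` of the disks `Pₖ₊₁ = Pₖ₊₁` in degrees `k + 1, k`. -/
noncomputable abbrev diskCover (P : ChainComplex C ℤ) : ChainComplex C ℤ :=
  ChainComplex.of (fun k => P.X k ⊞ P.X (k + 1)) (fun _ => biprod.fst ≫ biprod.inr)
    (fun _ => by simp)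

variable (P : ChainComplex C ℤ)

lemma diskCover_d (k : ℤ) : (diskCover P).d (k + 1) k = biprod.fst ≫ biprod.inr := by
  simp

noncomputable def diskCoverπ : diskCover P ⟶ P where
  f k := biprod.desc (𝟙 _) (P.d (k + 1) k)
  comm' i j hij := by
    obtain rfl : i = j + 1 := hij.symm
    rw [diskCover_d]
    ext <;> simp

instance : Epi (diskCoverπ P) :=
  epi_of_epi_f _ fun _ => (IsSplitEpi.mk' ⟨biprod.inl, by simp [diskCoverπ]⟩).epi

noncomputable def diskCoverHomotopy : Homotopy (𝟙 (diskCover P)) 0 := by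
  let h : ∀ i j, (ComplexShape.down ℤ).Rel j i → ((diskCover P).X i ⟶ (diskCover P).X j) :=
    fun _ _ hij => biprod.snd ≫ (P.XIsoOfEq hij).hom ≫ biprod.inl
  refine (Homotopy.ofEq ?_).trans (Homotopy.nullHomotopy' h)
  ext k : 1
  obtain ⟨m, rfl⟩ : ∃ m, k = m + 1 := ⟨k - 1, by ring⟩
  rw [Homotopy.nullHomotopicMap'_f (show (ComplexShape.down ℤ).Rel (m + 1 + 1) (m + 1) from rfl)
    (show (ComplexShape.down ℤ).Rel (m + 1) m from rfl), diskCover_d, diskCover_d]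
  ext <;> simp [h]

noncomputable def homotopyIdZeroOfProjective [Projective P] : Homotopy (𝟙 P) 0 :=
  let s := Projective.factorThru (𝟙 P) (diskCoverπ P)
  (Homotopy.ofEq (by simp [s])).trans
    ((((diskCoverHomotopy P).compLeft s).compRight (diskCoverπ P)).trans (Homotopy.ofEq (by simp)))

lemma exactAt_of_projective [CategoryWithHomology C] [Projective P] (i : ℤ) : P.ExactAt i :=
  exactAt_of_homotopy_id_zero (homotopyIdZeroOfProjective P) i

end DiskCover

lemma exists_comp_d_eq_of_subprojDomain_single [Abelian C] {X : C} [Projective X]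
    {K : ChainComplex C ℤ} {j : ℤ} (h : SubprojDomain ((single C (ComplexShape.down ℤ) j).obj X) K)
    (φ : X ⟶ K.X j) (hφ : φ ≫ K.d j (j - 1) = 0) :
    ∃ ψ : X ⟶ K.X (j + 1), ψ ≫ K.d (j + 1) j = φ := by
  obtain ⟨P, _, a, b, hab⟩ := h (mkHomFromSingle φ fun k hk => by
    obtain rfl : k = j - 1 := by simp at hk; omega
    exact hφ)
  obtain ⟨ψ, hψ⟩ := (exactAt_of_projective P j).exists_comp_d_eq (i := j + 1) (k := j - 1)
    (by simp) (by simp) ((singleObjXSelf _ j X).inv ≫ a.f j) (by simp [a.comm])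
  refine ⟨ψ ≫ b.f (j + 1), ?_⟩
  rw [Category.assoc, b.comm, reassoc_of% hψ, ← comp_f, hab, mkHomFromSingle_f,
    Iso.inv_hom_id_assoc]

end ChainComplex

lemma CategoryTheory.ShortComplex.moduleCat_exact_of_forall_lift {R : Type u} [Ring R]
    (S : ShortComplex (ModuleCat.{u} R))
    (h : ∀ φ : ModuleCat.of R R ⟶ S.X₂, φ ≫ S.g = 0 → ∃ ψ, ψ ≫ S.f = φ) : S.Exact := by
  rw [S.moduleCat_exact_iff]
  intro x hx
  obtain ⟨ψ, hψ⟩ := h (ModuleCat.ofHom (LinearMap.toSpanSingleton R _ x)) (by ext; simp [hx])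
  exact ⟨ψ 1, by simpa using ConcreteCategory.congr_hom hψ 1⟩

/-- a chain complex `N` is exact iff `N` lies in the subprojectivity domain
of the sphere complex `R[n]` for every integer `n`. -/
theorem exact_iff_subprojDomain_spheres
    {R : Type u} [Ring R] (N : ChainComplex (ModuleCat.{u} R) ℤ) :
    (∀ i : ℤ, N.ExactAt i) ↔
      ∀ n : ℤ, SubprojDomain
        ((HomologicalComplex.single (ModuleCat.{u} R) (ComplexShape.down ℤ) n).obj
          (ModuleCat.of R R)) N := by
  refine ⟨fun hN n => ?_, fun h i => ?_⟩
  · exact HomologicalComplex.subprojDomain_single_of_exactAt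
      (show (ComplexShape.down ℤ).Rel (n + 1) n from rfl) (by omega) (hN n)
  · rw [N.exactAt_iff' (i + 1) i (i - 1) (by simp) (by simp)]
    exact ShortComplex.moduleCat_exact_of_forall_lift _ fun φ hφ =>
      ChainComplex.exists_comp_d_eq_of_subprojDomain_single (h i) φ hφ
end
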